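/- arXiv:2303.05228 — 3 statements merged into one kernel-verified Lean document; each statement's English description precedes it below -/
import Mathlib

section
/- A no-boundary cellular automaton with a bipermutive local rule, restricted to input length 2b, defines a Latin square of order 2^b: for the map F : F_2^b × F_2^b → F_2^b given by applying a bipermutive rule f of diameter d = b+1 at positions 1,…,b of the concatenated input, both F(·, y) for each fixed y and F(x, ·) for each fixed x are bijections of F_2^b. -/
/-!
The `i`-th output is `x i + g(window) + y i`, where the window only sees `x j` for
`j > i` and `y j` for `j < i`. So `F(·, y)` is a triangular system, solved for `x` from the last
coordinate down, and `F(x, ·)` is one solved for `y` from the first coordinate up; injective maps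
of a finite set to itself are bijective.
-/

theorem injective_of_triangular {ι α : Type*} {r : ι → ι → Prop} (hr : WellFounded r)
    {Φ : (ι → α) → ι → α}
    (hΦ : ∀ x x' i, (∀ j, r j i → x j = x' j) → Φ x i = Φ x' i → x i = x' i) :
    Function.Injective Φ := fun x x' h =>
  funext fun i => hr.induction i fun i ih => hΦ x x' i ih (congrFun h i)

section Bipermutive

variable {R : Type*} [AddGroup R] {m : ℕ} {f : (Fin (m + 2) → R) → R} {g : (Fin m → R) → R}
  {w w' : Fin (m + 2) → R}

theorem head_eq_of_bipermutive
    (hf : ∀ x, f x = x 0 + g (fun i => x i.succ.castSucc) + x (Fin.last (m + 1)))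
    (h : ∀ j, j ≠ 0 → w j = w' j) (hw : f w = f w') : w 0 = w' 0 := by
  have hmid : (fun i : Fin m => w i.succ.castSucc) = fun i => w' i.succ.castSucc :=
    funext fun i => h _ (Fin.castSucc_ne_zero_iff.mpr (Fin.succ_ne_zero i))
  rw [hf, hf, hmid, h _ (Fin.last_pos.ne')] at hw
  exact add_right_cancel (add_right_cancel hw)

theorem last_eq_of_bipermutive
    (hf : ∀ x, f x = x 0 + g (fun i => x i.succ.castSucc) + x (Fin.last (m + 1)))
    (h : ∀ j, j ≠ Fin.last (m + 1) → w j = w' j) (hw : f w = f w') :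
    w (Fin.last (m + 1)) = w' (Fin.last (m + 1)) := by
  have hmid : (fun i : Fin m => w i.succ.castSucc) = fun i => w' i.succ.castSucc :=
    funext fun i => h _ (Fin.castSucc_ne_last _)
  rw [hf, hf, hmid, h 0 (Fin.last_pos.ne)] at hw
  exact add_left_cancel hw

end Bipermutive

section Append

variable {α : Type*} {a b : ℕ}

theorem append_apply_left_congr {x x' : Fin a → α} (y : Fin b → α) {i : ℕ}
    (h : ∀ j : Fin a, i < j → x j = x' j) {k : Fin (a + b)} (hk : i < k) :
    Fin.append x y k = Fin.append x' y k := by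
  induction k using Fin.addCases with
  | left j => simpa using h j hk
  | right j => simp

theorem append_apply_right_congr (x : Fin a → α) {y y' : Fin b → α} {i : ℕ}
    (h : ∀ j : Fin b, j < i → y j = y' j) {k : Fin (a + b)} (hk : k < a + i) :
    Fin.append x y k = Fin.append x y' k := by
  induction k using Fin.addCases with
  | left j => simp
  | right j => simpa using h j (by simpa using hk)

end Append

/-- A no-boundary CA with a bipermutive local rule of diameter `d = b + 1`
(here `b = m + 1`), restricted to inputs of length `2b`, defines a Latin square
of order `2^b`: the induced map `F : F_2^b × F_2^b → F_2^b` is a bijection in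
each argument separately. -/
theorem bipermutive_ca_is_latin_square (m : ℕ)
    (f : (Fin (m + 2) → ZMod 2) → ZMod 2)
    (g : (Fin m → ZMod 2) → ZMod 2)
    (hf : ∀ x, f x = x 0 + g (fun i => x i.succ.castSucc) + x (Fin.last (m + 1)))
    (F : (Fin (m + 1) → ZMod 2) → (Fin (m + 1) → ZMod 2) → Fin (m + 1) → ZMod 2)
    (hF : ∀ x y (i : Fin (m + 1)), F x y i =
      f (fun j : Fin (m + 2) => Fin.append x y
        ⟨i.val + j.val, by have := i.isLt; have := j.isLt; omega⟩)) :
    (∀ y, Function.Bijective (fun x => F x y)) ∧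
    (∀ x, Function.Bijective (F x)) := by
  have append_at_left (x y : Fin (m + 1) → ZMod 2) (i : Fin (m + 1)) (h) :
      Fin.append x y ⟨i.val, h⟩ = x i := Fin.append_left x y i
  have append_at_right (x y : Fin (m + 1) → ZMod 2) (i : Fin (m + 1)) (h) :
      Fin.append x y ⟨i.val + (m + 1), h⟩ = y i := by
    convert Fin.append_right x y i using 2
    exact Fin.ext (Nat.add_comm _ _)
  refine ⟨fun y => Finite.injective_iff_bijective.mp ?_,
    fun x => Finite.injective_iff_bijective.mp ?_⟩
  · refine injective_of_triangular wellFounded_gt fun x x' i hx hFi => ?_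
    rw [hF, hF] at hFi
    have hhead := head_eq_of_bipermutive hf (fun j hj => append_apply_left_congr y hx
      (Nat.lt_add_of_pos_right (Fin.pos_iff_ne_zero.mpr hj))) hFi
    simpa only [Fin.val_zero, add_zero, append_at_left] using hhead
  · refine injective_of_triangular wellFounded_lt fun y y' i hy hFi => ?_
    rw [hF, hF] at hFi
    have hlast := last_eq_of_bipermutive hf (fun j hj => append_apply_right_congr x hy
      (show i.val + j.val < m + 1 + i.val by have := Fin.val_lt_last hj; omega)) hFi
    simpa only [Fin.val_last, append_at_right] using hlast
end

section
/- For a no-boundary cellular automaton F : F_2^n → F_2^{n−d+1} with local rule f : F_2^d → F_2 of degree at least 1, every nonzero component function v·F has algebraic degree equal to the algebraic degree of f. -/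
/-!
The ANF coefficient of a monomial `w` in `x ↦ f (x ∘ e)`, for an embedding `e` of the variables
of `f`, is the coefficient of `w ∘ e` in `f` when `w` only involves variables in the range of
`e`, and zero otherwise. Hence `v·F` is a sum of shifted copies of the ANF of `f` and its degree
is at most `deg f`. For the reverse inequality take the last window `i₀` with `v i₀ ≠ 0` and,
among the top-degree monomials of `f`, one whose last variable `t` lies as far right as
possible. Shifted into window `i₀` it cannot cancel: in an earlier window `i` it would be read
as a top-degree monomial of `f` containing the variable `t + i₀ - i`, to the right of `t`.
-/

/-- The binary Möbius transform, giving the ANF coefficients of `f`. -/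
def moebius {n : ℕ} (f : (Fin n → ZMod 2) → ZMod 2) : (Fin n → ZMod 2) → ZMod 2 :=
  fun u => ∑ x ∈ Finset.univ.filter (fun x : Fin n → ZMod 2 => ∀ i, x i ≠ 0 → u i ≠ 0), f x

/-- The algebraic degree of a Boolean function: the maximal Hamming weight of a
monomial with nonzero ANF coefficient. -/
def degB {n : ℕ} (f : (Fin n → ZMod 2) → ZMod 2) : ℕ :=
  (Finset.univ.filter (fun u : Fin n → ZMod 2 => moebius f u ≠ 0)).sup
    (fun u => (Finset.univ.filter (fun i => u i ≠ 0)).card)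

open Finset Function

variable {k n : ℕ}

lemma le_degB {f : (Fin n → ZMod 2) → ZMod 2} {u : Fin n → ZMod 2} (hu : moebius f u ≠ 0) :
    hammingNorm u ≤ degB f :=
  le_sup (f := fun u : Fin n → ZMod 2 => #{i | u i ≠ 0}) (mem_filter.mpr ⟨mem_univ u, hu⟩)

lemma degB_le {f : (Fin n → ZMod 2) → ZMod 2} {b : ℕ}
    (h : ∀ u, moebius f u ≠ 0 → hammingNorm u ≤ b) : degB f ≤ b :=
  Finset.sup_le fun u hu => h u (mem_filter.mp hu).2

lemma exists_moebius_ne_zero_hammingNorm_eq_degB {f : (Fin n → ZMod 2) → ZMod 2}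
    (hf : degB f ≠ 0) : ∃ u, moebius f u ≠ 0 ∧ hammingNorm u = degB f := by
  have hne : ({u | moebius f u ≠ 0} : Finset (Fin n → ZMod 2)).Nonempty := by
    by_contra h
    rw [not_nonempty_iff_eq_empty] at h
    exact hf (by rw [degB, h, sup_empty, bot_eq_zero])
  obtain ⟨u, hu, hdeg⟩ := exists_mem_eq_sup _ hne fun u : Fin n → ZMod 2 => #{i | u i ≠ 0}
  exact ⟨u, (mem_filter.mp hu).2, hdeg.symm⟩

lemma moebius_sum_mul {ι : Type*} [Fintype ι] (c : ι → ZMod 2)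
    (g : ι → (Fin n → ZMod 2) → ZMod 2) (w : Fin n → ZMod 2) :
    moebius (fun x => ∑ i, c i * g i x) w = ∑ i, c i * moebius (g i) w := by
  simp only [moebius, mul_sum]
  exact sum_comm

lemma degB_sum_mul_le {ι : Type*} [Fintype ι] (c : ι → ZMod 2)
    {g : ι → (Fin n → ZMod 2) → ZMod 2} {b : ℕ} (hg : ∀ i, degB (g i) ≤ b) :
    degB (fun x => ∑ i, c i * g i x) ≤ b := by
  refine degB_le fun w hw => ?_
  rw [moebius_sum_mul] at hw
  obtain ⟨i, -, hi⟩ := exists_ne_zero_of_sum_ne_zero hw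
  exact (le_degB (right_ne_zero_of_mul hi)).trans (hg i)

lemma moebius_eq_zero_of_dependsOn {g : (Fin n → ZMod 2) → ZMod 2} {s : Set (Fin n)}
    (hg : DependsOn g s) {w : Fin n → ZMod 2} {j : Fin n} (hjs : j ∉ s) (hwj : w j ≠ 0) :
    moebius g w = 0 := by
  refine sum_involution (fun x _ => update x j (x j + 1)) (fun x _ => ?_) (fun x _ _ => ?_)
    (fun x hx => ?_) (fun x _ => ?_)
  · rw [hg fun i hi => update_of_ne (ne_of_mem_of_not_mem hi hjs) _ x]
    exact CharTwo.add_self_eq_zero _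
  · exact fun h => by simpa using congrFun h j
  · simp only [mem_filter, mem_univ, true_and] at hx ⊢
    intro i hi
    rcases eq_or_ne i j with rfl | hij
    · exact hwj
    · exact hx i (by rwa [update_of_ne hij] at hi)
  · ext i
    rcases eq_or_ne i j with rfl | hij
    · simp [add_assoc, CharTwo.add_self_eq_zero]
    · simp [update_of_ne hij]

lemma dependsOn_comp_embedding (f : (Fin k → ZMod 2) → ZMod 2) (e : Fin k ↪ Fin n) :
    DependsOn (fun x => f (x ∘ e)) (Set.range e) := fun _ _ hxy =>
  congrArg f (funext fun t => hxy _ ⟨t, rfl⟩)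

lemma mem_range_of_extend_ne_zero {α β γ : Type*} [Zero γ] {e : α → β} {g : α → γ} {b : β}
    (h : extend e g 0 b ≠ 0) : b ∈ Set.range e :=
  by_contra fun hb => h (extend_apply' _ _ _ hb)

lemma moebius_comp_embedding (f : (Fin k → ZMod 2) → ZMod 2) (e : Fin k ↪ Fin n)
    {w : Fin n → ZMod 2} (hw : ∀ j, w j ≠ 0 → j ∈ Set.range e) :
    moebius (fun x => f (x ∘ e)) w = moebius f (w ∘ e) := by
  refine sum_nbij' (· ∘ e) (fun y => extend e y 0) ?_ ?_ ?_ ?_ fun _ _ => rfl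
  all_goals simp only [mem_filter, mem_univ, true_and]
  · exact fun x hx t ht => hx _ ht
  · intro y hy j hj
    obtain ⟨t, rfl⟩ := mem_range_of_extend_ne_zero hj
    rw [e.injective.extend_apply] at hj
    exact hy t hj
  · intro x hx
    ext j
    by_cases hj : j ∈ Set.range e
    · obtain ⟨t, rfl⟩ := hj
      exact e.injective.extend_apply _ _ _
    · rw [extend_apply' _ _ _ hj]
      by_contra hxj
      exact hj (hw j (hx j (Ne.symm hxj)))
  · exact fun y _ => extend_comp e.injective _ _

lemma hammingNorm_comp_embedding (e : Fin k ↪ Fin n) {w : Fin n → ZMod 2}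
    (hw : ∀ j, w j ≠ 0 → j ∈ Set.range e) : hammingNorm (w ∘ e) = hammingNorm w := by
  refine card_nbij e (fun t ht => ?_) e.injective.injOn fun j hj => ?_
  · simpa using ht
  · obtain ⟨t, rfl⟩ := hw j (by simpa using hj)
    exact ⟨t, by simpa using hj, rfl⟩

lemma degB_comp_embedding_le (f : (Fin k → ZMod 2) → ZMod 2) (e : Fin k ↪ Fin n) :
    degB (fun x => f (x ∘ e)) ≤ degB f := by
  refine degB_le fun w hw => ?_
  have hsupp : ∀ j, w j ≠ 0 → j ∈ Set.range e := fun j hj => by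
    by_contra hje
    exact hw (moebius_eq_zero_of_dependsOn (dependsOn_comp_embedding f e) hje hj)
  rw [moebius_comp_embedding f e hsupp] at hw
  exact hammingNorm_comp_embedding e hsupp ▸ le_degB hw

lemma hammingNorm_extend_embedding (e : Fin k ↪ Fin n) (u : Fin k → ZMod 2) :
    hammingNorm (extend e u 0) = hammingNorm u := by
  rw [← hammingNorm_comp_embedding e fun _ => mem_range_of_extend_ne_zero, extend_comp e.injective]

lemma exists_top_monomial_with_rightmost_variable {f : (Fin n → ZMod 2) → ZMod 2}
    (hf : degB f ≠ 0) :
    ∃ u t, moebius f u ≠ 0 ∧ hammingNorm u = degB f ∧ u t ≠ 0 ∧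
      ∀ u' t', moebius f u' ≠ 0 → hammingNorm u' = degB f → u' t' ≠ 0 → t' ≤ t := by
  obtain ⟨u₀, hu₀, hwt₀⟩ := exists_moebius_ne_zero_hammingNorm_eq_degB hf
  obtain ⟨t₀, ht₀⟩ := ne_iff.mp (hammingNorm_ne_zero_iff.mp (hwt₀ ▸ hf))
  obtain ⟨⟨u, t⟩, hmem, hmax⟩ := exists_max_image
    ({p | moebius f p.1 ≠ 0 ∧ hammingNorm p.1 = degB f ∧ p.1 p.2 ≠ 0} :
      Finset ((Fin n → ZMod 2) × Fin n)) Prod.snd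
    ⟨(u₀, t₀), by simpa using ⟨hu₀, hwt₀, ht₀⟩⟩
  simp only [mem_filter, mem_univ, true_and] at hmem
  exact ⟨u, t, hmem.1, hmem.2.1, hmem.2.2, fun u' t' h₁ h₂ h₃ =>
    hmax (u', t') (by simpa using ⟨h₁, h₂, h₃⟩)⟩

section NoBoundaryCA

variable {m d : ℕ}

def caWindow (i : Fin (m + 1)) : Fin d ↪ Fin (m + d) :=
  ⟨fun t => ⟨i.val + t.val, by have := i.isLt; have := t.isLt; omega⟩,
    fun _ _ h => Fin.ext (by simpa using congrArg Fin.val h)⟩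

@[simp]
lemma caWindow_val (i : Fin (m + 1)) (t : Fin d) : (caWindow i t : ℕ) = i + t := rfl

lemma moebius_sum_comp_caWindow_extend (f : (Fin d → ZMod 2) → ZMod 2)
    (v : Fin (m + 1) → ZMod 2) {u : Fin d → ZMod 2} {t : Fin d} (hwt : hammingNorm u = degB f)
    (hut : u t ≠ 0)
    (hrightmost : ∀ u' t', moebius f u' ≠ 0 → hammingNorm u' = degB f → u' t' ≠ 0 → t' ≤ t)
    {i₀ : Fin (m + 1)} (hi₀ : ∀ i, v i ≠ 0 → i ≤ i₀) :
    moebius (fun x => ∑ i, v i * f (x ∘ caWindow i)) (extend (caWindow i₀) u 0) =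
      v i₀ * moebius f u := by
  set w := extend (caWindow i₀) u 0
  rw [moebius_sum_mul, sum_eq_single i₀ ?_ (by simp),
    moebius_comp_embedding f _ fun _ => mem_range_of_extend_ne_zero,
    extend_comp (caWindow i₀).injective]
  intro i _ hi
  by_cases hvi : v i = 0
  · rw [hvi, zero_mul]
  have hlt : i < i₀ := lt_of_le_of_ne (hi₀ i hvi) hi
  suffices moebius (fun x => f (x ∘ caWindow i)) w = 0 by rw [this, mul_zero]
  by_cases hsupp : ∀ j, w j ≠ 0 → j ∈ Set.range (caWindow i)
  · rw [moebius_comp_embedding f _ hsupp]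
    by_contra hne
    have hwt_i : hammingNorm (w ∘ caWindow i) = degB f := by
      rw [hammingNorm_comp_embedding _ hsupp, hammingNorm_extend_embedding, hwt]
    have hw_t : w (caWindow i₀ t) = u t := (caWindow i₀).injective.extend_apply _ _ _
    obtain ⟨t', ht'⟩ := hsupp _ (hw_t ▸ hut)
    have hle := hrightmost _ t' hne hwt_i (by simpa [ht', hw_t] using hut)
    rw [Fin.ext_iff, caWindow_val, caWindow_val] at ht'
    rw [Fin.lt_def] at hlt
    rw [Fin.le_def] at hle
    omega
  · push Not at hsupp
    obtain ⟨j, hj, hjr⟩ := hsupp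
    exact moebius_eq_zero_of_dependsOn (dependsOn_comp_embedding f _) hjr hj

end NoBoundaryCA

/-- For a no-boundary CA `F : F_2^{m+d} → F_2^{m+1}` with local rule `f` of
degree at least 1, every nonzero component function `v·F` has algebraic degree
equal to the algebraic degree of `f`. -/
theorem ca_component_degree (m d : ℕ)
    (f : (Fin d → ZMod 2) → ZMod 2) (hdeg : 1 ≤ degB f)
    (F : (Fin (m + d) → ZMod 2) → Fin (m + 1) → ZMod 2)
    (hF : ∀ x (i : Fin (m + 1)), F x i =
      f (fun j : Fin d => x ⟨i.val + j.val, by have := i.isLt; have := j.isLt; omega⟩))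
    (v : Fin (m + 1) → ZMod 2) (hv : v ≠ 0) :
    degB (fun x => ∑ i, v i * F x i) = degB f := by
  have hcomp : (fun x => ∑ i, v i * F x i) = fun x => ∑ i, v i * f (x ∘ caWindow i) := by
    funext x
    simp only [hF]
    rfl
  rw [hcomp]
  refine le_antisymm (degB_sum_mul_le v fun i => degB_comp_embedding_le f _) ?_
  obtain ⟨u, t, hu, hwt, hut, hrightmost⟩ :=
    exists_top_monomial_with_rightmost_variable (by omega : degB f ≠ 0)
  obtain ⟨i₀, hvi₀, hi₀⟩ := ({i | v i ≠ 0} : Finset (Fin (m + 1))).exists_max_image id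
    (by simpa [Finset.Nonempty] using ne_iff.mp hv)
  simp only [mem_filter, mem_univ, true_and, id] at hvi₀ hi₀
  calc degB f = hammingNorm (extend (caWindow i₀) u 0) := by
        rw [hammingNorm_extend_embedding, hwt]
    _ ≤ _ := le_degB <| by
        rw [moebius_sum_comp_caWindow_extend f v hwt hut hrightmost hi₀]
        exact mul_ne_zero hvi₀ hu
end

section
/- Let H : F_2^{2b} → F_2^{2b} be the superposition S-box of two CA with nonlinear bipermutive local rules f, g of diameter d = b+1. If v ∈ F_2^{2b} is a nonzero vector such that the component function v·H is affine, then the support of v intersects both {1,…,b} and {b+1,…,2b}. -/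
/-- A Boolean function is affine if it is of the form `x ↦ a·x ⊕ c`. -/
def IsAffine {n : ℕ} (g : (Fin n → ZMod 2) → ZMod 2) : Prop :=
  ∃ (a : Fin n → ZMod 2) (c : ZMod 2), ∀ x, g x = (∑ i, a i * x i) + c

open Finset Function

def supp {n : ℕ} (u : Fin n → ZMod 2) : Finset (Fin n) :=
  univ.filter (fun i => u i ≠ 0)

@[simp]
lemma mem_supp {n : ℕ} {u : Fin n → ZMod 2} {i : Fin n} : i ∈ supp u ↔ u i ≠ 0 := by
  simp [supp]

lemma card_supp_comp {k n : ℕ} {ι : Fin k → Fin n} (hι : Injective ι) {w : Fin n → ZMod 2}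
    (hw : ∀ p, w p ≠ 0 → p ∈ Set.range ι) : #(supp (w ∘ ι)) = #(supp w) := by
  refine card_nbij ι (fun j hj => by simpa using hj) hι.injOn fun p hp => ?_
  obtain ⟨j, rfl⟩ := hw p (mem_supp.mp hp)
  exact ⟨j, by simpa using hp, rfl⟩

lemma mem_range_of_extend_ne_zero_s9 {k n : ℕ} {ι : Fin k → Fin n} {u : Fin k → ZMod 2}
    {p : Fin n} (hp : extend ι u 0 p ≠ 0) : p ∈ Set.range ι :=
  by_contra fun h => hp (extend_apply' _ _ _ h)

lemma card_supp_extend {k n : ℕ} {ι : Fin k → Fin n} (hι : Injective ι) (u : Fin k → ZMod 2) :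
    #(supp (extend ι u 0)) = #(supp u) := by
  rw [← card_supp_comp hι fun _ => mem_range_of_extend_ne_zero_s9, extend_comp hι]

section Moebius

variable {n : ℕ}

lemma moebius_eq_zero_of_flip_invariant {h : (Fin n → ZMod 2) → ZMod 2} {w : Fin n → ZMod 2}
    {p : Fin n} (hp : w p ≠ 0) (hinv : ∀ x, h (x + Pi.single p 1) = h x) :
    moebius h w = 0 := by
  have hflip : ∀ x : Fin n → ZMod 2, x + Pi.single p 1 + Pi.single p 1 = x := fun x => by
    ext i
    simp only [Pi.add_apply, add_assoc, CharTwo.add_self_eq_zero, add_zero]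
  refine sum_involution (fun x _ => x + Pi.single p 1) (fun x _ => by
    rw [hinv, CharTwo.add_self_eq_zero]) (fun x _ _ hx => ?_) (fun x hx => ?_)
    (fun x _ => hflip x)
  · simpa using congrFun hx p
  · simp only [mem_filter, mem_univ, true_and] at hx ⊢
    intro i hi
    rcases eq_or_ne i p with rfl | hip
    · exact hp
    · exact hx i (by simpa [Pi.single_eq_of_ne hip] using hi)

lemma moebius_add (g h : (Fin n → ZMod 2) → ZMod 2) (w : Fin n → ZMod 2) :
    moebius (fun x => g x + h x) w = moebius g w + moebius h w :=
  sum_add_distrib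

lemma moebius_sum {ι : Type*} (s : Finset ι) (F : ι → (Fin n → ZMod 2) → ZMod 2)
    (w : Fin n → ZMod 2) : moebius (fun x => ∑ i ∈ s, F i x) w = ∑ i ∈ s, moebius (F i) w :=
  sum_comm

lemma moebius_const_mul (a : ZMod 2) (h : (Fin n → ZMod 2) → ZMod 2) (w : Fin n → ZMod 2) :
    moebius (fun x => a * h x) w = a * moebius h w :=
  mul_sum .. |>.symm

lemma moebius_eq_zero_of_isAffine {g : (Fin n → ZMod 2) → ZMod 2} (hg : IsAffine g)
    {w : Fin n → ZMod 2} (hw : 2 ≤ #(supp w)) : moebius g w = 0 := by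
  obtain ⟨a, c, hac⟩ := hg
  obtain ⟨p, hp⟩ := card_pos.mp (by omega : 0 < #(supp w))
  rw [funext hac, moebius_add, moebius_sum,
    moebius_eq_zero_of_flip_invariant (mem_supp.mp hp) fun _ => rfl, add_zero]
  refine sum_eq_zero fun i _ => ?_
  obtain ⟨q, hq, hqi⟩ := exists_mem_ne hw i
  exact moebius_eq_zero_of_flip_invariant (mem_supp.mp hq) fun x => by
    simp [Pi.single_eq_of_ne' hqi]

variable {k : ℕ} (f : (Fin k → ZMod 2) → ZMod 2) {ι : Fin k → Fin n}

lemma moebius_comp_eq_zero {w : Fin n → ZMod 2} {p : Fin n} (hp : w p ≠ 0)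
    (hpι : p ∉ Set.range ι) : moebius (fun x => f (x ∘ ι)) w = 0 :=
  moebius_eq_zero_of_flip_invariant hp fun x => by
    congr 1
    funext j
    simp [Pi.single_eq_of_ne' fun h => hpι ⟨j, h.symm⟩]

lemma moebius_comp (hι : Injective ι) {w : Fin n → ZMod 2}
    (hw : ∀ p, w p ≠ 0 → p ∈ Set.range ι) :
    moebius (fun x => f (x ∘ ι)) w = moebius f (w ∘ ι) := by
  refine sum_nbij' (· ∘ ι) (fun y => extend ι y 0) (fun x hx => ?_) (fun y hy => ?_)
    (fun x hx => ?_) (fun y _ => extend_comp hι y 0) (fun _ _ => rfl)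
  · simp only [mem_filter, mem_univ, true_and] at hx ⊢
    exact fun j hj => hx (ι j) hj
  · simp only [mem_filter, mem_univ, true_and] at hy ⊢
    intro p hp
    obtain ⟨j, rfl⟩ := mem_range_of_extend_ne_zero_s9 hp
    rw [hι.extend_apply] at hp
    exact hy j hp
  · simp only [mem_filter, mem_univ, true_and] at hx
    funext p
    by_cases hp : p ∈ Set.range ι
    · obtain ⟨j, rfl⟩ := hp
      exact hι.extend_apply _ _ j
    · rw [extend_apply' _ _ _ hp]
      by_contra hxp
      exact hp (hw p (hx p (Ne.symm hxp)))

end Moebius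

def IsNonlinearTerm {d : ℕ} (f : (Fin d → ZMod 2) → ZMod 2) (u : Fin d → ZMod 2) : Prop :=
  moebius f u ≠ 0 ∧ 2 ≤ #(supp u)

lemma exists_rightmost_isNonlinearTerm {d : ℕ} {f : (Fin d → ZMod 2) → ZMod 2}
    (hf : 2 ≤ degB f) : ∃ u t, IsNonlinearTerm f u ∧ u t ≠ 0 ∧
      ∀ u', IsNonlinearTerm f u' → ∀ j, u' j ≠ 0 → j ≤ t := by
  classical
  obtain ⟨u, hu, hcard : 2 ≤ #(supp u)⟩ := (Finset.le_sup_iff (by norm_num : (0 : ℕ) < 2)).mp hf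
  obtain ⟨j, hj⟩ := card_pos.mp (by omega : 0 < #(supp u))
  let P := univ.filter fun ut : (Fin d → ZMod 2) × Fin d =>
    IsNonlinearTerm f ut.1 ∧ ut.1 ut.2 ≠ 0
  have hP : (u, j) ∈ P :=
    mem_filter.mpr ⟨mem_univ _, ⟨(mem_filter.mp hu).2, hcard⟩, mem_supp.mp hj⟩
  obtain ⟨⟨u, t⟩, hut, hmax⟩ := exists_max_image P Prod.snd ⟨_, hP⟩
  obtain ⟨-, hu, ht⟩ := mem_filter.mp hut
  exact ⟨u, t, hu, ht, fun u' hu' j hj => hmax (u', j) (mem_filter.mpr ⟨mem_univ _, hu', hj⟩)⟩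

section Window

variable {k d n : ℕ} (h : k + d ≤ n + 1)

def window (i : Fin k) (j : Fin d) : Fin n :=
  ⟨i + j, by have := i.isLt; have := j.isLt; omega⟩

@[simp]
lemma val_window (i : Fin k) (j : Fin d) : (window h i j : ℕ) = i + j := rfl

lemma window_injective (i : Fin k) : Injective (window h i) :=
  fun j j' hjj' => Fin.ext (by simpa using congrArg Fin.val hjj')

lemma moebius_window_extend_eq_zero {f : (Fin d → ZMod 2) → ZMod 2} {u : Fin d → ZMod 2}
    {t : Fin d} (hu : 2 ≤ #(supp u)) (ht : u t ≠ 0)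
    (hmax : ∀ u', IsNonlinearTerm f u' → ∀ j, u' j ≠ 0 → j ≤ t) {i i₀ : Fin k} (hi : i < i₀) :
    moebius (fun x => f (x ∘ window h i)) (extend (window h i₀) u 0) = 0 := by
  set w := extend (window h i₀) u 0
  have hwt : w (window h i₀ t) = u t := (window_injective h i₀).extend_apply _ _ _
  by_cases hrange : ∀ p, w p ≠ 0 → p ∈ Set.range (window h i)
  · rw [moebius_comp f (window_injective h i) hrange]
    by_contra hne
    obtain ⟨t', ht'⟩ := hrange _ (hwt ▸ ht)
    have hterm : IsNonlinearTerm f (w ∘ window h i) := ⟨hne, by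
      rwa [card_supp_comp (window_injective h i) hrange, card_supp_extend (window_injective h i₀)]⟩
    have hle := hmax _ hterm t' (by simpa [ht', hwt] using ht)
    have hval := congrArg Fin.val ht'
    simp only [val_window] at hval
    exact absurd hle (not_le.mpr (Fin.lt_def.mpr (by omega)))
  · push Not at hrange
    obtain ⟨p, hp, hpi⟩ := hrange
    exact moebius_comp_eq_zero f hp hpi

theorem eq_zero_of_isAffine_sum_window {f : (Fin d → ZMod 2) → ZMod 2} (hf : 2 ≤ degB f)
    {c : Fin k → ZMod 2} (haff : IsAffine fun x => ∑ i, c i * f (x ∘ window h i)) : c = 0 := by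
  by_contra hc
  obtain ⟨u, t, ⟨hu, hcard⟩, ht, hmax⟩ := exists_rightmost_isNonlinearTerm hf
  have hsupp : (supp c).Nonempty := by
    obtain ⟨i, hi⟩ := ne_iff.mp hc
    exact ⟨i, mem_supp.mpr hi⟩
  set i₀ := (supp c).max' hsupp
  have hi₀ : c i₀ ≠ 0 := mem_supp.mp (max'_mem _ hsupp)
  set w := extend (window h i₀) u 0
  have hcoeff : moebius (fun x => ∑ i, c i * f (x ∘ window h i)) w = c i₀ * moebius f u := by
    simp only [moebius_sum, moebius_const_mul]
    rw [sum_eq_single i₀ (fun i _ hi => ?_) (by simp), moebius_comp f (window_injective h i₀)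
      (fun _ => mem_range_of_extend_ne_zero_s9), extend_comp (window_injective h i₀)]
    by_cases hci : c i = 0
    · rw [hci, zero_mul]
    · have hlt : i < i₀ := lt_of_le_of_ne (le_max' _ _ (mem_supp.mpr hci)) hi
      rw [moebius_window_extend_eq_zero h hcard ht hmax hlt, mul_zero]
  apply mul_ne_zero hi₀ hu
  rw [← hcoeff]
  exact moebius_eq_zero_of_isAffine haff (by rwa [card_supp_extend (window_injective h i₀)])

end Window

/-- If `v·H` is an affine component of the superposition S-box of two CA with
nonlinear bipermutive rules, then the support of `v` meets both halves
`{1,…,b}` and `{b+1,…,2b}` (here `b = m + 1`). -/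
theorem affine_component_support_meets_both_halves (m : ℕ)
    (f g : (Fin (m + 2) → ZMod 2) → ZMod 2)
    (hfdeg : 2 ≤ degB f) (hgdeg : 2 ≤ degB g)
    (H : (Fin ((m + 1) + (m + 1)) → ZMod 2) → Fin ((m + 1) + (m + 1)) → ZMod 2)
    (hH : ∀ x (i : Fin (m + 1)),
      H x (Fin.castAdd (m + 1) i) =
        f (fun j : Fin (m + 2) => x ⟨i.val + j.val, by have := i.isLt; have := j.isLt; omega⟩) ∧
      H x (Fin.natAdd (m + 1) i) =
        g (fun j : Fin (m + 2) => x ⟨i.val + j.val, by have := i.isLt; have := j.isLt; omega⟩))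
    (v : Fin ((m + 1) + (m + 1)) → ZMod 2) (hv : v ≠ 0)
    (hlin : IsAffine (fun x => ∑ i, v i * H x i)) :
    (∃ i : Fin (m + 1), v (Fin.castAdd (m + 1) i) ≠ 0) ∧
    (∃ i : Fin (m + 1), v (Fin.natAdd (m + 1) i) ≠ 0) := by
  have hwin : (m + 1) + (m + 2) ≤ (m + 1) + (m + 1) + 1 := by omega
  have hsplit : ∀ x, ∑ i, v i * H x i =
      ∑ i, v (Fin.castAdd (m + 1) i) * f (x ∘ window hwin i) +
        ∑ i, v (Fin.natAdd (m + 1) i) * g (x ∘ window hwin i) := fun x => by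
    simp only [Fin.sum_univ_add, (hH x _).1, (hH x _).2]
    rfl
  constructor
  · by_contra! hleft
    have hright : (fun i => v (Fin.natAdd (m + 1) i)) = 0 :=
      eq_zero_of_isAffine_sum_window hwin hgdeg <| by
        simpa only [hsplit, hleft, zero_mul, sum_const_zero, zero_add] using hlin
    exact hv (funext fun k => Fin.addCases (motive := fun k => v k = 0) hleft (congrFun hright) k)
  · by_contra! hright
    have hleft : (fun i => v (Fin.castAdd (m + 1) i)) = 0 :=
      eq_zero_of_isAffine_sum_window hwin hfdeg <| by
        simpa only [hsplit, hright, zero_mul, sum_const_zero, add_zero] using hlin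
    exact hv (funext fun k => Fin.addCases (motive := fun k => v k = 0) (congrFun hleft) hright k)
end
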